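/- arXiv:1001.0148 — 9 statements merged into one kernel-verified Lean document; each statement's English description precedes it below -/
import Mathlib

section
/- The function D on ℝ² satisfies a quasi-triangle inequality: there exists a constant M ≥ 1 such that D(p,r) ≤ M(D(p,q) + D(q,r)) for all p, q, r ∈ ℝ². -/
/-
Writing `z = q - p`, `D p q` depends only on `z` and equals `max |z₂| |z₁ - φ z₂|` with
`φ t = t log|t|`. The failure of `φ` to be additive is controlled linearly:
`|φ(a + b) - φ a - φ b| ≤ |a| + |b|`. For `a, b ≥ 0` this is the bound
`0 ≤ a log((a+b)/a) + b log((a+b)/b) ≤ a + b` coming from `log t ≤ t - 1`, and the other sign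
patterns reduce to it because `φ` is odd. Hence the triangle inequality holds with constant `2`.
-/

noncomputable def D (p q : ℝ × ℝ) : ℝ :=
  max |q.2 - p.2| (abs ((q.1 - p.1) - (q.2 - p.2) * Real.log |q.2 - p.2|))

open Real

noncomputable section

-- `Real.log t = log |t|` and `Real.log 0 = 0`, so `t * log t` is the paper's `t log|t|`.
def mulLogDefect (a b : ℝ) : ℝ :=
  (a + b) * log (a + b) - a * log a - b * log b

lemma mulLogDefect_comm (a b : ℝ) : mulLogDefect a b = mulLogDefect b a := by
  unfold mulLogDefect; rw [add_comm a b]; ring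

lemma mulLogDefect_neg (a b : ℝ) : mulLogDefect (-a) (-b) = -mulLogDefect a b := by
  unfold mulLogDefect; rw [← neg_add, log_neg_eq_log, log_neg_eq_log, log_neg_eq_log]; ring

lemma mulLogDefect_add_neg (a b : ℝ) : mulLogDefect (a + b) (-b) = -mulLogDefect a b := by
  unfold mulLogDefect; rw [add_neg_cancel_right, log_neg_eq_log]; ring

lemma mul_log_add_sub_log_nonneg {x y : ℝ} (hx : 0 ≤ x) (hy : 0 ≤ y) :
    0 ≤ x * (log (x + y) - log x) := by
  rcases hx.eq_or_lt with rfl | hx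
  · simp
  exact mul_nonneg hx.le (sub_nonneg.2 (log_le_log hx (by linarith)))

lemma mul_log_add_sub_log_le {x y : ℝ} (hx : 0 ≤ x) (hy : 0 ≤ y) :
    x * (log (x + y) - log x) ≤ y := by
  rcases hx.eq_or_lt with rfl | hx
  · simpa using hy
  calc x * (log (x + y) - log x) = x * log ((x + y) / x) := by
        rw [log_div (by positivity) hx.ne']
    _ ≤ x * ((x + y) / x - 1) := by gcongr; exact log_le_sub_one_of_pos (by positivity)
    _ = y := by field_simp; ring

lemma mulLogDefect_eq (x y : ℝ) :
    mulLogDefect x y = x * (log (x + y) - log x) + y * (log (x + y) - log y) := by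
  unfold mulLogDefect; ring

lemma mulLogDefect_nonneg {x y : ℝ} (hx : 0 ≤ x) (hy : 0 ≤ y) : 0 ≤ mulLogDefect x y := by
  rw [mulLogDefect_eq]
  have := mul_log_add_sub_log_nonneg hx hy
  have := mul_log_add_sub_log_nonneg hy hx
  rw [add_comm y x] at this
  linarith

lemma mulLogDefect_le {x y : ℝ} (hx : 0 ≤ x) (hy : 0 ≤ y) : mulLogDefect x y ≤ x + y := by
  rw [mulLogDefect_eq]
  have := mul_log_add_sub_log_le hx hy
  have := mul_log_add_sub_log_le hy hx
  rw [add_comm y x] at this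
  linarith

lemma abs_mulLogDefect_le_of_nonneg {x y : ℝ} (hx : 0 ≤ x) (hy : 0 ≤ y) :
    |mulLogDefect x y| ≤ x + y :=
  abs_le.2 ⟨by linarith [mulLogDefect_nonneg hx hy], mulLogDefect_le hx hy⟩

lemma abs_mulLogDefect_le_of_nonneg_left {a : ℝ} (b : ℝ) (ha : 0 ≤ a) :
    |mulLogDefect a b| ≤ |a| + |b| := by
  rcases le_or_gt 0 b with hb | hb
  · rw [abs_of_nonneg ha, abs_of_nonneg hb]
    exact abs_mulLogDefect_le_of_nonneg ha hb
  rw [abs_of_nonneg ha, abs_of_neg hb]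
  rcases le_or_gt 0 (a + b) with hab | hab
  · have := abs_mulLogDefect_le_of_nonneg hab (neg_nonneg.2 hb.le)
    rw [mulLogDefect_add_neg, abs_neg] at this
    linarith
  · have e : mulLogDefect (-(a + b)) a = mulLogDefect a b := by
      calc mulLogDefect (-(a + b)) a = -mulLogDefect (a + b) (-a) := by
            rw [← mulLogDefect_neg, neg_neg]
        _ = mulLogDefect a b := by
            rw [add_comm, mulLogDefect_add_neg, neg_neg, mulLogDefect_comm]
    have := abs_mulLogDefect_le_of_nonneg (neg_nonneg.2 hab.le) ha
    rw [e] at this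
    linarith

lemma abs_mulLogDefect_le (a b : ℝ) : |mulLogDefect a b| ≤ |a| + |b| := by
  rcases le_or_gt 0 a with ha | ha
  · exact abs_mulLogDefect_le_of_nonneg_left b ha
  · have := abs_mulLogDefect_le_of_nonneg_left (-b) (neg_nonneg.2 ha.le)
    rwa [mulLogDefect_neg, abs_neg, abs_neg, abs_neg] at this

def logGauge (z : ℝ × ℝ) : ℝ :=
  max |z.2| |z.1 - z.2 * log z.2|

lemma D_eq_logGauge_sub (p q : ℝ × ℝ) : D p q = logGauge (q - p) := by
  simp only [D, logGauge, Prod.fst_sub, Prod.snd_sub, log_abs]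

lemma logGauge_add_le (z w : ℝ × ℝ) : logGauge (z + w) ≤ 2 * (logGauge z + logGauge w) := by
  obtain ⟨u, a⟩ := z
  obtain ⟨v, b⟩ := w
  simp only [logGauge, Prod.mk_add_mk]
  have ha := le_max_left |a| |u - a * log a|
  have hu := le_max_right |a| |u - a * log a|
  have hb := le_max_left |b| |v - b * log b|
  have hv := le_max_right |b| |v - b * log b|
  have hdefect := abs_mulLogDefect_le a b
  have hsplit : u + v - (a + b) * log (a + b)
      = (u - a * log a) + (v - b * log b) - mulLogDefect a b := by
    unfold mulLogDefect; ring
  refine max_le ?_ ?_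
  · linarith [abs_add_le a b, abs_nonneg a, abs_nonneg b]
  · rw [hsplit]
    linarith [abs_sub ((u - a * log a) + (v - b * log b)) (mulLogDefect a b),
      abs_add_le (u - a * log a) (v - b * log b)]

end

theorem stmt_1 :
    ∃ M : ℝ, 1 ≤ M ∧ ∀ p q r : ℝ × ℝ, D p r ≤ M * (D p q + D q r) := by
  refine ⟨2, one_le_two, fun p q r => ?_⟩
  simp only [D_eq_logGauge_sub]
  simpa only [sub_add_sub_cancel'] using logGauge_add_le (q - p) (r - q)
end

section
/- For each real number t, the map λ_t(x,y) = (e^t(x+ty), e^t y) is a similarity of (ℝ², D) with factor e^t: D(λ_t(p), λ_t(q)) = e^t · D(p,q) for all p, q ∈ ℝ². -/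
theorem stmt_4 (t : ℝ) (p q : ℝ × ℝ) :
    D (Real.exp t * (p.1 + t * p.2), Real.exp t * p.2)
      (Real.exp t * (q.1 + t * q.2), Real.exp t * q.2) = Real.exp t * D p q := by
  have het : (0:ℝ) < Real.exp t := Real.exp_pos t
  set a := q.2 - p.2 with ha
  set b := q.1 - p.1 with hb
  have h1 : Real.exp t * q.2 - Real.exp t * p.2 = Real.exp t * a := by ring
  have h2 : Real.exp t * (q.1 + t * q.2) - Real.exp t * (p.1 + t * p.2)
      = Real.exp t * (b + t * a) := by ring
  simp only [D, h1, h2]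
  rcases eq_or_ne a 0 with h0 | h0
  · have h0' : q.2 - p.2 = 0 := ha ▸ h0
    simp [h0, h0', ← hb, abs_of_pos het, mul_max_of_nonneg _ _ het.le, abs_mul]
    positivity
  · have hlog : Real.log |Real.exp t * a| = t + Real.log |a| := by
      rw [abs_mul, abs_of_pos het, Real.log_mul (ne_of_gt het) (abs_ne_zero.mpr h0),
        Real.log_exp, Real.log_abs]
    rw [hlog]
    have h3 : Real.exp t * (b + t * a) - Real.exp t * a * (t + Real.log |a|)
        = Real.exp t * (b - a * Real.log |a|) := by ring
    rw [h3, abs_mul, abs_mul, abs_of_pos het, mul_max_of_nonneg _ _ het.le]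
end

section
/- For a < -1 and u > 0 satisfying e^u = u - a, one has |a| ≤ e^u ≤ 3|a|. -/
theorem stmt_6 (a u : ℝ) (ha : a < -1) (hu : 0 < u) (h : Real.exp u = u - a) :
    |a| ≤ Real.exp u ∧ Real.exp u ≤ 3 * |a| := by
  rw [abs_of_neg (by linarith : a < 0)]
  constructor
  · linarith
  · have h2 : Real.exp u = Real.exp (u/2) ^ 2 := by
      rw [sq, ← Real.exp_add]; ring_nf
    have h3 : u/2 + 1 ≤ Real.exp (u/2) := Real.add_one_le_exp _
    nlinarith [sq_nonneg (u - 2), Real.exp_pos (u/2)]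
end

section
/- If F : ℝ² → ℝ² has the form F(x,y) = (ax + c(y), ay + b) where a ≠ 0, b ∈ ℝ are constants and c : ℝ → ℝ is L-Lipschitz, then F is Lipschitz with respect to D with Lipschitz constant |a| + L + |a·log|a||: D(F(p), F(q)) ≤ (|a| + L + |a·log|a||)·D(p,q) for all p,q ∈ ℝ². -/
theorem stmt_7 (a b L : ℝ) (ha : a ≠ 0) (c : ℝ → ℝ)
    (hc : ∀ y y' : ℝ, |c y - c y'| ≤ L * |y - y'|)
    (F : ℝ × ℝ → ℝ × ℝ) (hF : ∀ p : ℝ × ℝ, F p = (a * p.1 + c p.2, a * p.2 + b)) :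
    ∀ p q : ℝ × ℝ, D (F p) (F q) ≤ (|a| + L + (abs (a * Real.log |a|))) * D p q := by
  have hL : 0 ≤ L := by
    have h := hc 0 1
    have := abs_nonneg (c 0 - c 1)
    simp at h
    linarith
  intro p q
  obtain ⟨x₁, y₁⟩ := p
  obtain ⟨x₂, y₂⟩ := q
  simp only [hF, D]
  have e2 : a * y₂ + b - (a * y₁ + b) = a * (y₂ - y₁) := by ring
  rw [e2]
  set Δy := y₂ - y₁ with hΔy
  set M := max (|Δy|) (|x₂ - x₁ - Δy * Real.log (|Δy|)|) with hM
  have hM0 : 0 ≤ M := le_trans (abs_nonneg _) (le_max_left _ _)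
  have h1 : |Δy| ≤ M := le_max_left _ _
  have h2 : |x₂ - x₁ - Δy * Real.log (|Δy|)| ≤ M := le_max_right _ _
  have hK : |a| ≤ |a| + L + |a * Real.log (|a|)| := by
    have := abs_nonneg (a * Real.log |a|); linarith
  apply max_le
  · calc |a * Δy| = |a| * |Δy| := abs_mul _ _
      _ ≤ |a| * M := by gcongr
      _ ≤ (|a| + L + |a * Real.log (|a|)|) * M := by gcongr
  · rcases eq_or_ne Δy 0 with h0 | h0
    · have hy : y₂ = y₁ := by linarith [hΔy ▸ h0]
      rw [h0, hy]
      simp only [sub_self, abs_zero, mul_zero, zero_mul, sub_zero]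
      have : a * x₂ + c y₁ - (a * x₁ + c y₁) = a * (x₂ - x₁) := by ring
      rw [this, abs_mul]
      have h2' : |x₂ - x₁| ≤ M := by
        have : x₂ - x₁ - Δy * Real.log |Δy| = x₂ - x₁ := by rw [h0]; ring
        rw [this] at h2; exact h2
      calc |a| * |x₂ - x₁| ≤ |a| * M := by gcongr
        _ ≤ (|a| + L + |a * Real.log (|a|)|) * M := by gcongr
    · have hlog : Real.log |a * Δy| = Real.log |a| + Real.log |Δy| := by
        rw [abs_mul, Real.log_mul (abs_ne_zero.2 ha) (abs_ne_zero.2 h0)]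
      rw [hlog]
      have key : a * x₂ + c y₂ - (a * x₁ + c y₁) - a * Δy * (Real.log |a| + Real.log |Δy|)
          = a * (x₂ - x₁ - Δy * Real.log |Δy|) + (c y₂ - c y₁) - (a * Real.log |a|) * Δy := by
        ring
      rw [key]
      have hcd : |c y₂ - c y₁| ≤ L * |Δy| := hc y₂ y₁
      calc |a * (x₂ - x₁ - Δy * Real.log |Δy|) + (c y₂ - c y₁) - (a * Real.log |a|) * Δy|
          ≤ |a * (x₂ - x₁ - Δy * Real.log |Δy|) + (c y₂ - c y₁)| + |(a * Real.log |a|) * Δy| :=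
            abs_sub _ _
        _ ≤ |a * (x₂ - x₁ - Δy * Real.log |Δy|)| + |c y₂ - c y₁| + |(a * Real.log |a|) * Δy| := by
            linarith [abs_add_le (a * (x₂ - x₁ - Δy * Real.log |Δy|)) (c y₂ - c y₁)]
        _ ≤ |a| * M + L * |Δy| + |a * Real.log (|a|)| * |Δy| := by
            rw [abs_mul, abs_mul]
            gcongr
        _ ≤ |a| * M + L * M + |a * Real.log (|a|)| * M := by
            gcongr
        _ = (|a| + L + |a * Real.log (|a|)|) * M := by ring
end

section
/- If F : ℝ² → ℝ² has the form F(x,y) = (ax + c(y), ay + b) with a ≠ 0, b constants and c : ℝ → ℝ Lipschitz, then F is biLipschitz with respect to D: there exists K ≥ 1 with D(p,q)/K ≤ D(F(p), F(q)) ≤ K·D(p,q) for all p,q ∈ ℝ². -/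
private lemma tri3 (x y z : ℝ) : |x + y - z| ≤ |x| + |y| + |z| := by
  calc |x + y - z| = |x + y + (-z)| := by rw [sub_eq_add_neg]
    _ ≤ |x| + |y| + |(-z)| := abs_add_three _ _ _
    _ = |x| + |y| + |z| := by rw [abs_neg]

private lemma aux_biLip (A L M x y x' y' : ℝ) (hA0 : 0 < A) (hL : 0 ≤ L) (hM0 : 0 ≤ M)
    (hy' : |y'| = A * |y|)
    (hx' : |x'| ≤ A * |x| + L * |y| + A * M * |y|)
    (hx : A * |x| ≤ |x'| + L * |y| + A * M * |y|) :
    max |y| |x| / (1 + (A + L + A * M) + (A + L + A * M) / A ^ 2) ≤ max |y'| |x'| ∧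
    max |y'| |x'| ≤ (1 + (A + L + A * M) + (A + L + A * M) / A ^ 2) * max |y| |x| := by
  have hA2 : (0:ℝ) < A ^ 2 := by positivity
  have hQ0 : (0:ℝ) ≤ (A + L + A * M) / A ^ 2 := div_nonneg (by positivity) hA2.le
  have hK1pos : (0:ℝ) < A + L + A * M := by positivity
  have hKpos : (0:ℝ) < 1 + (A + L + A * M) + (A + L + A * M) / A ^ 2 := by linarith
  have hT0 : 0 ≤ max |y| |x| := le_trans (abs_nonneg y) (le_max_left _ _)
  have hT'0 : 0 ≤ max |y'| |x'| := le_trans (abs_nonneg y') (le_max_left _ _)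
  have huT : |y| ≤ max |y| |x| := le_max_left _ _
  have hwT : |x| ≤ max |y| |x| := le_max_right _ _
  have h1 : A * |y| ≤ max |y'| |x'| := hy' ▸ le_max_left |y'| |x'|
  have h2 : |x'| ≤ max |y'| |x'| := le_max_right _ _
  have hub : max |y'| |x'| ≤ (A + L + A * M) * max |y| |x| := by
    apply max_le
    · rw [hy']
      linarith [mul_le_mul_of_nonneg_left huT hA0.le, mul_nonneg hL hT0,
        mul_nonneg (mul_nonneg hA0.le hM0) hT0]
    · linarith [mul_le_mul_of_nonneg_left hwT hA0.le, mul_le_mul_of_nonneg_left huT hL,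
        mul_le_mul_of_nonneg_left huT (mul_nonneg hA0.le hM0)]
  have hlb : A ^ 2 * max |y| |x| ≤ (A + L + A * M) * max |y'| |x'| := by
    rcases max_cases |y| |x| with ⟨h, _⟩ | ⟨h, _⟩ <;> rw [h]
    · nlinarith [mul_le_mul_of_nonneg_left h1 hA0.le, mul_nonneg hL hT'0,
        mul_nonneg (mul_nonneg hA0.le hM0) hT'0]
    · nlinarith [mul_le_mul_of_nonneg_left hx hA0.le, mul_le_mul_of_nonneg_left h1 hL,
        mul_le_mul_of_nonneg_left h1 (mul_nonneg hA0.le hM0)]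
  constructor
  · rw [div_le_iff₀ hKpos]
    have h4 : max |y| |x| ≤ (A + L + A * M) / A ^ 2 * max |y'| |x'| := by
      rw [div_mul_eq_mul_div, le_div_iff₀ hA2]
      nlinarith [hlb]
    nlinarith [h4, hT'0, mul_nonneg hK1pos.le hT'0]
  · nlinarith [hub, hT0, mul_nonneg hQ0 hT0]

theorem stmt_9 (a b L : ℝ) (ha : a ≠ 0) (c : ℝ → ℝ)
    (hc : ∀ y y' : ℝ, |c y - c y'| ≤ L * |y - y'|)
    (F : ℝ × ℝ → ℝ × ℝ) (hF : ∀ p : ℝ × ℝ, F p = (a * p.1 + c p.2, a * p.2 + b)) :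
    ∃ K : ℝ, 1 ≤ K ∧ ∀ p q : ℝ × ℝ,
      D p q / K ≤ D (F p) (F q) ∧ D (F p) (F q) ≤ K * D p q := by
  have hL : 0 ≤ L := by
    have h := hc 0 1
    simp at h
    nlinarith [abs_nonneg (c 0 - c 1)]
  have hA0 : (0:ℝ) < |a| := abs_pos.mpr ha
  have hM0 : (0:ℝ) ≤ |Real.log a| := abs_nonneg _
  have hK1pos : (0:ℝ) < |a| + L + |a| * |Real.log a| := by positivity
  have hQ0 : (0:ℝ) ≤ (|a| + L + |a| * |Real.log a|) / |a| ^ 2 :=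
    div_nonneg hK1pos.le (by positivity)
  refine ⟨1 + (|a| + L + |a| * |Real.log a|) +
      (|a| + L + |a| * |Real.log a|) / |a| ^ 2, by linarith, ?_⟩
  intro p q
  set u := q.2 - p.2 with hu
  set w := (q.1 - p.1) - u * Real.log |u| with hw
  have hDpq : D p q = max |u| |w| := rfl
  set d := c q.2 - c p.2 with hd
  have hdL : |d| ≤ L * |u| := by
    have := hc q.2 p.2
    simpa [hd, hu] using this
  have h2 : (F q).2 - (F p).2 = a * u := by rw [hF p, hF q]; simp only [hu]; ring
  have h1 : (F q).1 - (F p).1 = a * (q.1 - p.1) + d := by rw [hF p, hF q]; simp only [hd]; ring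
  have hlog : a * u * Real.log |a * u| = a * u * Real.log a + a * u * Real.log |u| := by
    rcases eq_or_ne u 0 with h | h
    · simp [h]
    · rw [abs_mul, Real.log_mul (abs_ne_zero.mpr ha) (abs_ne_zero.mpr h), Real.log_abs,
        Real.log_abs]
      ring
  have hDF : D (F p) (F q) = max |a * u| |a * w + d - a * Real.log a * u| := by
    rw [D, h1, h2, hlog]
    congr 2
    rw [hw]; ring
  have e1 : |a * Real.log a * u| = |a| * |Real.log a| * |u| := by rw [abs_mul, abs_mul]
  have eaw : |a * w| = |a| * |w| := abs_mul _ _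
  rw [hDpq, hDF]
  apply aux_biLip |a| L |Real.log a| w u (a * w + d - a * Real.log a * u) (a * u)
    hA0 hL hM0 (abs_mul a u)
  · -- |x'| ≤ A|w| + L|u| + A M |u|
    have ht := tri3 (a * w) d (a * Real.log a * u)
    rw [e1, eaw] at ht
    linarith
  · -- A|w| ≤ |x'| + L|u| + A M |u|
    have e : |a| * |w| = |(a * w + d - a * Real.log a * u) + a * Real.log a * u - d| := by
      rw [← abs_mul]; congr 1; ring
    rw [e]
    have ht := tri3 (a * w + d - a * Real.log a * u) (a * Real.log a * u) d
    rw [e1] at ht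
    linarith
end

section
/- With respect to D, the Hausdorff distance between two horizontal lines ℝ×{y₁} and ℝ×{y₂} equals |y₁ - y₂|. -/
lemma D_le (p q : ℝ × ℝ) : |q.2 - p.2| ≤ D p q := le_max_left _ _

lemma inf1 (y₁ y₂ x : ℝ) : (⨅ x' : ℝ, D (x, y₁) (x', y₂)) = |y₂ - y₁| := by
  apply le_antisymm
  · have := ciInf_le (f := fun x' : ℝ => D (x, y₁) (x', y₂))
      (c := x + (y₂ - y₁) * Real.log |y₂ - y₁|)
      ⟨|y₂ - y₁|, fun r ⟨x', hx'⟩ => hx' ▸ D_le (x, y₁) (x', y₂)⟩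
    refine this.trans_eq ?_
    simp [D]
  · exact le_ciInf fun x' => D_le (x, y₁) (x', y₂)

lemma inf2 (y₁ y₂ x' : ℝ) : (⨅ x : ℝ, D (x, y₁) (x', y₂)) = |y₂ - y₁| := by
  apply le_antisymm
  · have := ciInf_le (f := fun x : ℝ => D (x, y₁) (x', y₂))
      (c := x' - (y₂ - y₁) * Real.log |y₂ - y₁|)
      ⟨|y₂ - y₁|, fun r ⟨x, hx⟩ => hx ▸ D_le (x, y₁) (x', y₂)⟩
    refine this.trans_eq ?_
    simp [D]
  · exact le_ciInf fun x => D_le (x, y₁) (x', y₂)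

theorem stmt_11 (y₁ y₂ : ℝ) :
    max (⨆ x : ℝ, ⨅ x' : ℝ, D (x, y₁) (x', y₂))
        (⨆ x' : ℝ, ⨅ x : ℝ, D (x, y₁) (x', y₂)) = |y₁ - y₂| := by
  simp only [inf1, inf2, ciSup_const, max_self, abs_sub_comm y₂ y₁]
end

section
/- For any point p = (x₁, y₁) ∈ ℝ² and any y₂ ∈ ℝ, the D-distance from p to the horizontal line ℝ×{y₂} equals |y₁ - y₂|: inf{D(p, (x, y₂)) : x ∈ ℝ} = |y₁ - y₂|. -/
theorem stmt_12 (x₁ y₁ y₂ : ℝ) :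
    (⨅ x : ℝ, D (x₁, y₁) (x, y₂)) = |y₁ - y₂| := by
  have hbdd : BddBelow (Set.range fun x : ℝ => D (x₁, y₁) (x, y₂)) := by
    refine ⟨0, ?_⟩
    rintro _ ⟨x, rfl⟩
    exact le_trans (abs_nonneg _) (le_max_left _ _)
  apply le_antisymm
  · have := ciInf_le hbdd (x₁ + (y₂ - y₁) * Real.log |y₂ - y₁|)
    refine this.trans_eq ?_
    simp only [D]
    rw [add_sub_cancel_left, sub_self, abs_zero, abs_sub_comm y₂ y₁]
    exact max_eq_left (abs_nonneg _)
  · refine le_ciInf fun x => ?_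
    rw [abs_sub_comm y₁ y₂]
    exact le_max_left _ _
end

section
/- If F : ℝ² → ℝ² of the form F(x,y) = (x + c(y), y) (with c : ℝ → ℝ a function satisfying c(0) = 0) is an isometry of (ℝ², D), then c(y) = 0 for all y, i.e., F is the identity map. -/
theorem stmt_14 (c : ℝ → ℝ) (hc0 : c 0 = 0)
    (F : ℝ × ℝ → ℝ × ℝ) (hF : ∀ p : ℝ × ℝ, F p = (p.1 + c p.2, p.2))
    (hiso : ∀ p q : ℝ × ℝ, D (F p) (F q) = D p q) :
    ∀ y : ℝ, c y = 0 := by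
  intro y
  by_contra hcy
  have hy : y ≠ 0 := fun h => hcy (by rw [h, hc0])
  have hay : 0 < |y| := abs_pos.2 hy
  set t : ℝ := if 0 < c y then |y| else -|y| with ht
  have habst : |t| = |y| := by
    by_cases h : 0 < c y <;> simp [ht, h, abs_of_pos hay]
  have habs : |t + c y| = |y| + |c y| := by
    rcases lt_or_gt_of_ne hcy with h | h
    · have htv : t = -|y| := by simp [ht, not_lt.2 h.le]
      have hneg : t + c y < 0 := by rw [htv]; linarith
      rw [abs_of_neg hneg, abs_of_neg h, htv]; ring
    · have htv : t = |y| := by simp [ht, h]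
      have hpos : 0 < t + c y := by rw [htv]; linarith
      rw [abs_of_pos hpos, abs_of_pos h, htv]
  have hD1 : D (0, 0) (t + y * Real.log |y|, y) = |y| := by
    simp only [D, sub_zero]
    rw [show t + y * Real.log |y| - y * Real.log |y| = t by ring, habst, max_self]
  have hD2 : D (F (0, 0)) (F (t + y * Real.log |y|, y)) = |y| + |c y| := by
    rw [hF, hF]
    simp only [D, hc0, add_zero, zero_add, sub_zero]
    rw [show t + y * Real.log |y| + c y - y * Real.log |y| = t + c y by ring, habs]
    exact max_eq_right (by linarith [abs_nonneg (c y)])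
  have key := hiso (0, 0) (t + y * Real.log |y|, y)
  rw [hD1, hD2] at key
  exact hcy (abs_eq_zero.1 (by linarith))
end

section
/- Suppose F : ℝ² → ℝ² has the form F(x,y) = (ax + c(y), ay + b) with a ≠ 0, b constants and c : ℝ → ℝ a function, and suppose F is L-Lipschitz with respect to D for some L ≥ 1. Then c is (L + |a·log|a||)-Lipschitz: |c(y₂) - c(y₁)| ≤ (L + |a·log|a||)·|y₂ - y₁| for all y₁, y₂. -/
theorem stmt_15 (a b L : ℝ) (ha : a ≠ 0) (hL : 1 ≤ L) (c : ℝ → ℝ)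
    (F : ℝ × ℝ → ℝ × ℝ) (hF : ∀ p : ℝ × ℝ, F p = (a * p.1 + c p.2, a * p.2 + b))
    (hlip : ∀ p q : ℝ × ℝ, D (F p) (F q) ≤ L * D p q) :
    ∀ y₁ y₂ : ℝ, |c y₂ - c y₁| ≤ (L + (abs (a * Real.log |a|))) * |y₂ - y₁| := by
  intro y₁ y₂
  set t := y₂ - y₁ with ht
  rcases eq_or_ne t 0 with h0 | h0
  · have hy : y₂ = y₁ := by linarith [sub_eq_zero.mp h0]
    have h0' : |t| = 0 := by rw [h0, abs_zero]
    rw [hy]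
    simp [← ht, h0']
  · have ht0 : |t| ≠ 0 := abs_ne_zero.mpr h0
    have htpos : (0:ℝ) < |t| := abs_pos.mpr h0
    have key := hlip (0, y₁) (t * Real.log |t|, y₂)
    have hDpq : D (0, y₁) (t * Real.log |t|, y₂) = |t| := by
      simp only [D, ← ht]
      rw [sub_zero, sub_self, abs_zero]
      exact max_eq_left (abs_nonneg t)
    rw [hDpq] at key
    rw [hF, hF] at key
    simp only [D] at key
    have h2 : (a * y₂ + b) - (a * y₁ + b) = a * t := by ring
    have hlog : Real.log |a * t| = Real.log |a| + Real.log |t| := by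
      rw [abs_mul, Real.log_mul (abs_ne_zero.mpr ha) ht0]
    have h1 : ((a * (t * Real.log |t|) + c y₂) - (a * 0 + c y₁))
        - ((a * y₂ + b) - (a * y₁ + b)) * Real.log |(a * y₂ + b) - (a * y₁ + b)|
        = c y₂ - c y₁ - a * Real.log |a| * t := by
      rw [h2, hlog]; ring
    simp only [h1] at key
    have key2 : |c y₂ - c y₁ - a * Real.log |a| * t| ≤ L * |t| :=
      le_trans (le_max_right _ _) key
    calc |c y₂ - c y₁|
        = |(c y₂ - c y₁ - a * Real.log |a| * t) + a * Real.log |a| * t| := by ring_nf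
      _ ≤ |c y₂ - c y₁ - a * Real.log |a| * t| + |a * Real.log |a| * t| := abs_add_le _ _
      _ ≤ L * |t| + abs (a * Real.log |a|) * |t| := by
          rw [abs_mul]; exact add_le_add key2 le_rfl
      _ = (L + abs (a * Real.log |a|)) * |t| := by ring
end
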